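/- Let e(n) = deg B_n(t) be the degree of the n-th Stern polynomial. Then for every natural number n ≥ 2, the minimum of e(i) over all indices i with 2^{n-1} ≤ i ≤ 2^n equals ⌊n/2⌋, and for every natural number n ≥ 1, the maximum of e(i) over all indices i with 2^{n-1} ≤ i ≤ 2^n equals n. -/
import Mathlib


open Polynomial

/-- The Stern polynomials: `B 0 = 0`, `B 1 = 1`, `B (2n) = t * B n`,
`B (2n+1) = B n + B (n+1)`. -/
noncomputable def stern : ℕ → Polynomial ℤ
  | 0 => 0
  | 1 => 1
  | n + 2 =>
    if _h : n % 2 = 0 then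
      X * stern (n / 2 + 1)
    else
      stern (n / 2 + 1) + stern (n / 2 + 2)
  decreasing_by all_goals omega

/-- `e n` is the degree of the `n`-th Stern polynomial. -/
noncomputable def e (n : ℕ) : ℕ := (stern n).natDegree

lemma stern_two_mul (n : ℕ) (h : 1 ≤ n) : stern (2 * n) = X * stern n := by
  obtain ⟨m, rfl⟩ := Nat.exists_eq_add_of_le h
  have h2 : 2 * (1 + m) = 2 * m + 2 := by ring
  rw [h2, stern, dif_pos (by omega : (2*m) % 2 = 0)]
  congr 2
  omega

lemma stern_two_mul_add_one (n : ℕ) (h : 1 ≤ n) : stern (2 * n + 1) = stern n + stern (n + 1) := by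
  obtain ⟨m, rfl⟩ := Nat.exists_eq_add_of_le h
  have h2 : 2 * (1 + m) + 1 = (2 * m + 1) + 2 := by ring
  rw [h2, stern, dif_neg (by omega : ¬ (2*m+1) % 2 = 0)]
  congr 2 <;> omega

lemma stern_one : stern 1 = 1 := by rw [stern]

lemma stern_eval_one_pos : ∀ n : ℕ, 1 ≤ n → 0 < (stern n).eval 1 := by
  intro n
  induction n using Nat.strong_induction_on with
  | _ n ih =>
    intro hn
    match n, hn with
    | 1, _ => simp [stern_one]
    | (m+2), _ =>
      rcases Nat.even_or_odd' (m+2) with ⟨j, hj | hj⟩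
      · have hj1 : 1 ≤ j := by omega
        rw [hj, stern_two_mul j hj1]
        have := ih j (by omega) hj1
        simp only [eval_mul, eval_X]
        linarith
      · have hj1 : 1 ≤ j := by omega
        rw [hj, stern_two_mul_add_one j hj1]
        have h1 := ih j (by omega) hj1
        have h2 := ih (j+1) (by omega) (by omega)
        simp only [eval_add]
        linarith

lemma stern_ne_zero (n : ℕ) (h : 1 ≤ n) : stern n ≠ 0 := by
  intro hz
  have := stern_eval_one_pos n h
  rw [hz] at this
  simp at this

lemma stern_coeff_nonneg : ∀ n k : ℕ, 0 ≤ (stern n).coeff k := by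
  intro n
  induction n using Nat.strong_induction_on with
  | _ n ih =>
    intro k
    match n with
    | 0 => simp [stern]
    | 1 => rw [stern_one]; simp [coeff_one]; positivity
    | (m+2) =>
      rcases Nat.even_or_odd' (m+2) with ⟨j, hj | hj⟩
      · have hj1 : 1 ≤ j := by omega
        rw [hj, stern_two_mul j hj1]
        rcases k with _ | k
        · simp [mul_coeff_zero, coeff_X_zero]
        · rw [coeff_X_mul]
          exact ih j (by omega) k
      · have hj1 : 1 ≤ j := by omega
        rw [hj, stern_two_mul_add_one j hj1, coeff_add]
        have := ih j (by omega) k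
        have := ih (j+1) (by omega) k
        linarith

lemma e_two_mul (n : ℕ) (h : 1 ≤ n) : e (2 * n) = e n + 1 := by
  unfold e
  rw [stern_two_mul n h, natDegree_mul X_ne_zero (stern_ne_zero n h), natDegree_X]
  omega

lemma stern_leading_pos (n : ℕ) (h : 1 ≤ n) : 0 < (stern n).coeff (stern n).natDegree := by
  have h1 := stern_coeff_nonneg n (stern n).natDegree
  have h2 : (stern n).coeff (stern n).natDegree ≠ 0 := by
    rw [← leadingCoeff]
    exact leadingCoeff_ne_zero.mpr (stern_ne_zero n h)
  exact lt_of_le_of_ne h1 (Ne.symm h2)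

lemma e_two_mul_add_one (n : ℕ) (h : 1 ≤ n) : e (2 * n + 1) = max (e n) (e (n + 1)) := by
  unfold e
  rw [stern_two_mul_add_one n h]
  apply le_antisymm (natDegree_add_le _ _)
  apply le_natDegree_of_ne_zero
  rw [coeff_add]
  rcases le_total (stern n).natDegree (stern (n+1)).natDegree with hle | hle
  · rw [max_eq_right hle]
    have h1 := stern_leading_pos (n+1) (by omega)
    have h2 := stern_coeff_nonneg n (stern (n+1)).natDegree
    intro hc; linarith
  · rw [max_eq_left hle]
    have h1 := stern_leading_pos n h
    have h2 := stern_coeff_nonneg (n+1) (stern n).natDegree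
    intro hc; linarith
lemma e_zero : e 0 = 0 := by unfold e; rw [stern]; simp

lemma e_one : e 1 = 0 := by unfold e; rw [stern_one]; simp

lemma e_pow (n : ℕ) : e (2 ^ n) = n := by
  induction n with
  | zero => simpa using e_one
  | succ k ih =>
    have : 2 ^ (k+1) = 2 * 2 ^ k := by ring
    rw [this, e_two_mul (2^k) (Nat.one_le_two_pow), ih]

lemma one_le_e : ∀ i : ℕ, 2 ≤ i → 1 ≤ e i := by
  intro i
  induction i using Nat.strong_induction_on with
  | _ i ih =>
    intro hi
    rcases Nat.even_or_odd' i with ⟨j, hj | hj⟩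
    · have hj1 : 1 ≤ j := by omega
      rw [hj, e_two_mul j hj1]; omega
    · have hj1 : 1 ≤ j := by omega
      rw [hj, e_two_mul_add_one j hj1]
      have := ih (j+1) (by omega) (by omega)
      omega

lemma e_upper : ∀ n : ℕ, ∀ i : ℕ, i ≤ 2 ^ n → e i ≤ n := by
  intro n
  induction n with
  | zero =>
    intro i hi
    interval_cases i
    · simp [e_zero]
    · simp [e_one]
  | succ k ih =>
    intro i hi
    rcases Nat.even_or_odd' i with ⟨j, hj | hj⟩
    · rcases Nat.eq_zero_or_pos j with rfl | hj1
      · simp [hj, e_zero]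
      · rw [hj, e_two_mul j hj1]
        have := ih j (by rw [pow_succ] at hi; omega)
        omega
    · rcases Nat.eq_zero_or_pos j with rfl | hj1
      · simp [hj, e_one]
      · rw [hj, e_two_mul_add_one j hj1]
        have h1 := ih j (by rw [pow_succ] at hi; omega)
        have h2 := ih (j+1) (by rw [pow_succ] at hi; omega)
        omega

lemma e_lower : ∀ m : ℕ, ∀ i : ℕ, 2 ^ m ≤ i → (m + 1) / 2 ≤ e i := by
  intro m
  induction m using Nat.strong_induction_on with
  | _ m ih =>
    intro i hi
    match m with
    | 0 => omega
    | 1 => have := one_le_e i (by simpa using hi); omega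
    | (m+2) =>
      rcases Nat.even_or_odd' i with ⟨j, hj | hj⟩
      · have hj1 : 2 ^ (m+1) ≤ j := by rw [pow_succ] at *; omega
        rw [hj, e_two_mul j (by have := Nat.one_le_two_pow (n := m+1); omega)]
        have := ih (m+1) (by omega) j hj1
        omega
      · have hj1 : 2 ^ (m+1) ≤ j := by
          have : (2:ℕ) ^ (m+2) = 2 * 2 ^ (m+1) := by ring
          omega
        have h2j : 1 ≤ j := by have := Nat.one_le_two_pow (n := m+1); omega
        rw [hj, e_two_mul_add_one j h2j]
        rcases Nat.even_or_odd' j with ⟨a, ha | ha⟩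
        · have ha1 : 2 ^ m ≤ a := by
            have : (2:ℕ) ^ (m+1) = 2 * 2 ^ m := by ring
            omega
          have hm := ih m (by omega) a ha1
          have he : e j = e a + 1 := by
            rw [ha, e_two_mul a (by have := Nat.one_le_two_pow (n := m); omega)]
          omega
        · have ha1 : 2 ^ m ≤ a + 1 := by
            have : (2:ℕ) ^ (m+1) = 2 * 2 ^ m := by ring
            omega
          have hm := ih m (by omega) (a+1) ha1
          have he : e (j+1) = e (a+1) + 1 := by
            have hrw : j + 1 = 2 * (a + 1) := by omega
            rw [hrw, e_two_mul (a+1) (by omega)]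
          omega
def u : ℕ → ℕ
  | 0 => 0
  | k+1 => 4 * u k + 2

lemma u_pos (k : ℕ) (h : 1 ≤ k) : 2 ≤ u k := by
  match k with
  | j+1 => simp only [u]; omega

lemma u_e (k : ℕ) (h : 1 ≤ k) : e (u k) = k ∧ e (u k + 1) = k := by
  induction k with
  | zero => omega
  | succ k ih =>
    rcases Nat.eq_zero_or_pos k with rfl | hk
    · constructor
      · show e (4 * u 0 + 2) = 1
        simp only [u]
        rw [show (4 * 0 + 2 : ℕ) = 2 * 1 by norm_num, e_two_mul 1 le_rfl, e_one]
      · show e (4 * u 0 + 2 + 1) = 1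
        simp only [u]
        rw [show (4 * 0 + 2 + 1 : ℕ) = 2 * 1 + 1 by norm_num, e_two_mul_add_one 1 le_rfl,
          e_one, show (1 + 1 : ℕ) = 2 * 1 by norm_num, e_two_mul 1 le_rfl, e_one]
        omega
    · obtain ⟨h1, h2⟩ := ih hk
      have hu := u_pos k hk
      have hmid : e (2 * u k + 1) = k := by
        rw [e_two_mul_add_one (u k) (by omega), h1, h2]; omega
      have hmid2 : e (2 * u k + 2) = k + 1 := by
        rw [show 2 * u k + 2 = 2 * (u k + 1) by ring, e_two_mul (u k + 1) (by omega), h2]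
      constructor
      · show e (4 * u k + 2) = k + 1
        rw [show 4 * u k + 2 = 2 * (2 * u k + 1) by ring, e_two_mul _ (by omega), hmid]
      · show e (4 * u k + 2 + 1) = k + 1
        rw [show 4 * u k + 2 + 1 = 2 * (2 * u k + 1) + 1 by ring,
          e_two_mul_add_one _ (by omega), hmid]
        rw [show 2 * u k + 1 + 1 = 2 * u k + 2 by ring, hmid2]
        omega

lemma u_lb (k : ℕ) (h : 1 ≤ k) : 2 ^ (2 * k - 1) ≤ u k := by
  induction k with
  | zero => omega
  | succ k ih =>
    rcases Nat.eq_zero_or_pos k with rfl | hk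
    · simp [u]
    · have := ih hk
      have hp : 2 ^ (2 * (k+1) - 1) = 2 ^ (2 * k - 1) * 4 := by
        rw [show 2 * (k+1) - 1 = (2 * k - 1) + 2 by omega, pow_add]; norm_num
      show 2 ^ (2 * (k+1) - 1) ≤ 4 * u k + 2
      omega

lemma u_ub (k : ℕ) (h : 1 ≤ k) : u k + 2 ≤ 2 ^ (2 * k) := by
  induction k with
  | zero => omega
  | succ k ih =>
    rcases Nat.eq_zero_or_pos k with rfl | hk
    · simp [u]
    · have := ih hk
      have hp : 2 ^ (2 * (k+1)) = 2 ^ (2 * k) * 4 := by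
        rw [show 2 * (k+1) = 2 * k + 2 by omega, pow_add]; norm_num
      show 4 * u k + 2 + 2 ≤ 2 ^ (2 * (k+1))
      omega

theorem stern_degree_min_max_on_dyadic_interval (n : ℕ) :
    (2 ≤ n → IsLeast {k : ℕ | ∃ i : ℕ, 2 ^ (n - 1) ≤ i ∧ i ≤ 2 ^ n ∧ k = e i} (n / 2)) ∧
    (1 ≤ n → IsGreatest {k : ℕ | ∃ i : ℕ, 2 ^ (n - 1) ≤ i ∧ i ≤ 2 ^ n ∧ k = e i} n) := by
  constructor
  · intro hn
    constructor
    · rcases Nat.even_or_odd' n with ⟨k, hk | hk⟩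
      · -- n = 2k, witness u k
        have hk1 : 1 ≤ k := by omega
        refine ⟨u k, ?_, ?_, ?_⟩
        · have := u_lb k hk1
          rw [show n - 1 = 2 * k - 1 by omega]
          exact this
        · have := u_ub k hk1
          rw [hk]
          omega
        · rw [(u_e k hk1).1]
          omega
      · -- n = 2k+1, witness 2 * u k + 1
        have hk1 : 1 ≤ k := by omega
        obtain ⟨h1, h2⟩ := u_e k hk1
        refine ⟨2 * u k + 1, ?_, ?_, ?_⟩
        · have := u_lb k hk1
          have hp : 2 ^ (n - 1) = 2 ^ (2 * k - 1) * 2 := by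
            rw [show n - 1 = (2 * k - 1) + 1 by omega, pow_add]; norm_num
          omega
        · have := u_ub k hk1
          have hp : 2 ^ n = 2 ^ (2 * k) * 2 := by
            rw [show n = 2 * k + 1 by omega, pow_add]; norm_num
          omega
        · rw [e_two_mul_add_one (u k) (by have := u_pos k hk1; omega), h1, h2]
          omega
    · rintro x ⟨i, hi1, hi2, rfl⟩
      have := e_lower (n - 1) i hi1
      omega
  · intro hn
    constructor
    · refine ⟨2 ^ n, Nat.pow_le_pow_right (by norm_num) (by omega), le_rfl, (e_pow n).symm⟩
    · rintro x ⟨i, hi1, hi2, rfl⟩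
      exact e_upper n i hi2
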